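/- Let ρ be a d×d density matrix and let Φ₁,…,Φ_N (N ≥ 3) be quantum channels on d×d matrices, where Φ_s has Kraus operators K₁ˢ,…,K_nˢ. Then for any permutations π₁,…,π_N of {1,…,n}, ∑_{s=1}^{N} √(I_ρ(Φ_s)) ≥ (1/(N−2)) { ∑_{1≤s<t≤N} √( ∑_{i=1}^{n} I_ρ(K^s_{π_s(i)} + K^t_{π_t(i)}) ) − √( ∑_{i=1}^{n} I_ρ( ∑_{s=1}^{N} K^s_{π_s(i)} ) ) }. -/

import Mathlib

/-! `2 I_ρ(A)` is the squared Euclidean norm of the entries of `[√ρ, A]`, and `A ↦ [√ρ, A]` is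
linear, so each square root in the statement is `‖v‖ / √2` for a vector built from the commutators
of a (permuted) Kraus family, with sums of families going to sums of vectors; the permutations
merely reorder the sum defining `I_ρ(Φ_s)`. The theorem is then Djoković's generalization
`∑_{s<t} ‖v_s + v_t‖ ≤ (N - 2) ∑_s ‖v_s‖ + ‖∑_s v_s‖` of Hlawka's inequality, proved by induction
on `N` by merging two of the vectors into one. -/

open Matrix Finset
open scoped ComplexOrder

/-- The positive semidefinite square root of a positive semidefinite matrix, as `Matrix.PosSemidef.sqrt`
was defined in the older Mathlib. -/
noncomputable def posSemidefSqrt {d : ℕ} {ρ : Matrix (Fin d) (Fin d) ℂ} (hρ : ρ.PosSemidef) :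
    Matrix (Fin d) (Fin d) ℂ :=
  hρ.1.eigenvectorUnitary.1 * diagonal ((↑) ∘ (√·) ∘ hρ.1.eigenvalues) *
  (star hρ.1.eigenvectorUnitary : Matrix (Fin d) (Fin d) ℂ)

/-- Wigner–Yanase skew information `I_ρ(A) = (1/2) Tr([√ρ, A]† [√ρ, A])` of a matrix `A`
with respect to a positive semidefinite matrix `ρ`, where `√ρ = hρ.sqrt` is the positive
semidefinite square root of `ρ`. -/
noncomputable def skewInfo {d : ℕ} {ρ : Matrix (Fin d) (Fin d) ℂ} (hρ : ρ.PosSemidef)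
    (A : Matrix (Fin d) (Fin d) ℂ) : ℝ :=
  (1 / 2 : ℝ) *
    (((posSemidefSqrt hρ * A - A * posSemidefSqrt hρ)ᴴ * (posSemidefSqrt hρ * A - A * posSemidefSqrt hρ)).trace).re

theorem hlawka (𝕜 : Type*) [RCLike 𝕜] {E : Type*} [NormedAddCommGroup E] [InnerProductSpace 𝕜 E]
    (a b c : E) : ‖a + b‖ + ‖b + c‖ + ‖a + c‖ ≤ ‖a‖ + ‖b‖ + ‖c‖ + ‖a + b + c‖ := by
  have hsq : ‖a + b‖ ^ 2 + ‖b + c‖ ^ 2 + ‖a + c‖ ^ 2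
      = ‖a‖ ^ 2 + ‖b‖ ^ 2 + ‖c‖ ^ 2 + ‖a + b + c‖ ^ 2 := by
    simp only [norm_add_sq (𝕜 := 𝕜), inner_add_left, map_add]
    ring
  have hab := norm_sub_le (a + b + c) c
  have hbc := norm_sub_le (a + b + c) a
  have hac := norm_sub_le (a + b + c) b
  have hab' := norm_add_le a b
  have hbc' := norm_add_le b c
  have hac' := norm_add_le a c
  rw [add_sub_cancel_right] at hab
  rw [show a + b + c - a = b + c by abel] at hbc
  rw [show a + b + c - b = a + c by abel] at hac
  set T := ‖a‖ + ‖b‖ + ‖c‖ + ‖a + b + c‖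
  -- by `hsq`, this splits into products of triangle-inequality defects, all nonnegative
  have key : T * (T - ‖a + b‖ - ‖b + c‖ - ‖a + c‖)
      = (‖a‖ + ‖b‖ - ‖a + b‖) * (‖c‖ + ‖a + b + c‖ - ‖a + b‖)
        + (‖b‖ + ‖c‖ - ‖b + c‖) * (‖a‖ + ‖a + b + c‖ - ‖b + c‖)
        + (‖a‖ + ‖c‖ - ‖a + c‖) * (‖b‖ + ‖a + b + c‖ - ‖a + c‖) := by
    linear_combination -hsq
  have hdefects : 0 ≤ T * (T - ‖a + b‖ - ‖b + c‖ - ‖a + c‖) := by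
    rw [key]
    refine add_nonneg (add_nonneg ?_ ?_) ?_ <;> apply mul_nonneg <;> linarith
  have hT : 0 ≤ T := by positivity
  rcases hT.eq_or_lt with hT0 | hTpos
  · linarith [norm_nonneg (a + b + c)]
  · linarith [nonneg_of_mul_nonneg_right hdefects hTpos]

theorem Fin.sum_sum_Ioi_succ {M : Type*} [AddCommMonoid M] {N : ℕ}
    (f : Fin (N + 1) → Fin (N + 1) → M) :
    ∑ s, ∑ t ∈ Ioi s, f s t
      = ∑ t : Fin N, f 0 t.succ + ∑ s : Fin N, ∑ t ∈ Ioi s, f s.succ t.succ := by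
  simp only [Fin.sum_univ_succ (f := fun s => ∑ t ∈ Ioi s, f s t), Fin.sum_Ioi_zero,
    Fin.sum_Ioi_succ]

theorem sum_sum_Ioi_norm_add_le (𝕜 : Type*) [RCLike 𝕜] {E : Type*} [NormedAddCommGroup E]
    [InnerProductSpace 𝕜 E] {N : ℕ} (v : Fin N → E) :
    ∑ s, ∑ t ∈ Ioi s, ‖v s + v t‖ ≤ ((N : ℝ) - 2) * ∑ s, ‖v s‖ + ‖∑ s, v s‖ := by
  induction N with
  | zero => simp
  | succ N ih =>
    cases N with
    | zero => simp; linarith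
    | succ N =>
      -- apply the induction hypothesis to `v 0 + v 1, v 2, …` and Hlawka to `v 0, v 1, v t`
      have hmerged := ih (Fin.cons (v 0 + v 1) fun t => v t.succ.succ)
      have hsum : ∑ t : Fin N, (‖v 0 + v 1‖ + ‖v 1 + v t.succ.succ‖ + ‖v 0 + v t.succ.succ‖)
          ≤ ∑ t : Fin N, (‖v 0‖ + ‖v 1‖ + ‖v t.succ.succ‖ + ‖v 0 + v 1 + v t.succ.succ‖) :=
        Finset.sum_le_sum fun t _ => hlawka 𝕜 (v 0) (v 1) (v t.succ.succ)
      rw [Fin.sum_sum_Ioi_succ] at hmerged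
      rw [Fin.sum_sum_Ioi_succ, Fin.sum_sum_Ioi_succ]
      simp only [Fin.sum_univ_succ, Fin.cons_zero, Fin.cons_succ, Fin.succ_zero_eq_one,
        Finset.sum_add_distrib, Finset.sum_const, Finset.card_univ, Fintype.card_fin,
        nsmul_eq_mul] at hmerged hsum ⊢
      rw [← add_assoc (v 0)]
      push_cast at hmerged ⊢
      linarith

theorem EuclideanSpace.norm_sq_toLp_vec {𝕜 ι m n : Type*} [RCLike 𝕜] [Fintype ι] [Fintype m]
    [Fintype n] (Y : ι → Matrix m n 𝕜) :
    ‖WithLp.toLp 2 (fun q : ι × n × m => (Y q.1).vec q.2)‖ ^ 2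
      = ∑ i, RCLike.re ((Y i)ᴴ * Y i).trace := by
  rw [@norm_sq_eq_re_inner 𝕜, EuclideanSpace.inner_toLp_toLp, dotProduct, Fintype.sum_prod_type,
    map_sum]
  refine Finset.sum_congr rfl fun i _ => ?_
  rw [← star_vec_dotProduct_vec, dotProduct_comm]
  rfl

noncomputable def commutatorVec {𝕜 ι m : Type*} [RCLike 𝕜] [Fintype m] (S : Matrix m m 𝕜) :
    (ι → Matrix m m 𝕜) →ₗ[𝕜] EuclideanSpace 𝕜 (ι × m × m) where
  toFun B := WithLp.toLp 2 fun q => (S * B q.1 - B q.1 * S).vec q.2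
  map_add' B C := by
    ext q
    simp only [Pi.add_apply, mul_add, add_mul, vec_sub, vec_add, PiLp.add_apply, Pi.sub_apply]
    abel
  map_smul' c B := by
    ext q
    simp only [Pi.smul_apply, mul_smul_comm, smul_mul_assoc, ← smul_sub, vec_smul, PiLp.smul_apply,
      RingHom.id_apply]

theorem sqrt_sum_skewInfo {d : ℕ} {ρ : Matrix (Fin d) (Fin d) ℂ} (hρ : ρ.PosSemidef) {ι : Type*}
    [Fintype ι] (B : ι → Matrix (Fin d) (Fin d) ℂ) :
    √(∑ i, skewInfo hρ (B i)) = √(1 / 2) * ‖commutatorVec (posSemidefSqrt hρ) B‖ := by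
  have hsum : ∑ i, skewInfo hρ (B i) = 1 / 2 * ‖commutatorVec (posSemidefSqrt hρ) B‖ ^ 2 := by
    rw [commutatorVec, LinearMap.coe_mk, AddHom.coe_mk,
      EuclideanSpace.norm_sq_toLp_vec fun i => posSemidefSqrt hρ * B i - B i * posSemidefSqrt hρ,
      mul_sum]
    rfl
  rw [hsum, Real.sqrt_mul (by norm_num), Real.sqrt_sq (norm_nonneg _)]

theorem stmt_4_general {d n N : ℕ} (hN : 3 ≤ N)
    (ρ : Matrix (Fin d) (Fin d) ℂ) (hρ : ρ.PosSemidef)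
    (K : Fin N → Fin n → Matrix (Fin d) (Fin d) ℂ)
    (π : Fin N → Equiv.Perm (Fin n)) :
    ∑ s, Real.sqrt (∑ i, skewInfo hρ (K s i)) ≥
      (1 / ((N : ℝ) - 2)) *
        ((∑ s : Fin N, ∑ t ∈ Finset.Ioi s,
            Real.sqrt (∑ i, skewInfo hρ (K s (π s i) + K t (π t i))))
          - Real.sqrt (∑ i, skewInfo hρ (∑ s, K s (π s i)))) := by
  set W := commutatorVec (ι := Fin n) (posSemidefSqrt hρ)
  set B : Fin N → Fin n → Matrix (Fin d) (Fin d) ℂ := fun s i => K s (π s i)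
  have hchannel : ∀ s, √(∑ i, skewInfo hρ (K s i)) = √(1 / 2) * ‖W (B s)‖ := fun s => by
    rw [← sqrt_sum_skewInfo, ← Equiv.sum_comp (π s)]
  have hpair : ∀ s t, √(∑ i, skewInfo hρ (K s (π s i) + K t (π t i)))
      = √(1 / 2) * ‖W (B s) + W (B t)‖ := fun s t => by
    rw [← map_add, ← sqrt_sum_skewInfo]
    rfl
  have htotal : √(∑ i, skewInfo hρ (∑ s, K s (π s i))) = √(1 / 2) * ‖∑ s, W (B s)‖ := by
    rw [← map_sum, ← sqrt_sum_skewInfo]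
    simp only [Finset.sum_apply, B]
  have hN2 : (0 : ℝ) < N - 2 := by
    have : (3 : ℝ) ≤ N := by exact_mod_cast hN
    linarith
  simp only [hchannel, hpair, htotal, ← mul_sum, ← mul_sub]
  rw [ge_iff_le, one_div, inv_mul_le_iff₀ hN2, mul_left_comm]
  gcongr
  linarith [sum_sum_Ioi_norm_add_le ℂ fun s => W (B s)]

theorem stmt_4 {d n N : ℕ} (hN : 3 ≤ N)
    (ρ : Matrix (Fin d) (Fin d) ℂ) (hρ : ρ.PosSemidef) (htr : ρ.trace = 1)
    (K : Fin N → Fin n → Matrix (Fin d) (Fin d) ℂ)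
    (hK : ∀ s, ∑ i, (K s i)ᴴ * K s i = 1)
    (π : Fin N → Equiv.Perm (Fin n)) :
    ∑ s, Real.sqrt (∑ i, skewInfo hρ (K s i)) ≥
      (1 / ((N : ℝ) - 2)) *
        ((∑ s : Fin N, ∑ t ∈ Finset.Ioi s,
            Real.sqrt (∑ i, skewInfo hρ (K s (π s i) + K t (π t i))))
          - Real.sqrt (∑ i, skewInfo hρ (∑ s, K s (π s i)))) :=
  stmt_4_general hN ρ hρ K π
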